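/- arXiv:2502.10007 — 2 statements merged into one kernel-verified Lean document; each statement's English description precedes it below -/
import Mathlib

section
/- Let K be an infinite field and f ∈ K[x₁,…,xₙ] a nonzero quadratic form (homogeneous of degree 2). Then s_K(f) equals the minimal codimension of a K-linear subspace W of Kⁿ such that f(w) = 0 for all w ∈ W. -/
open MvPolynomial

/-- A decomposition of `f` as a sum of `r` products of pairs of homogeneous polynomials
of positive degree; witnesses "strength at most `r`". -/
def StrengthDecomp {K : Type*} [CommSemiring K] {σ : Type*}
    (f : MvPolynomial σ K) (r : ℕ) : Prop :=
  ∃ (a b : Fin r → MvPolynomial σ K) (da db : Fin r → ℕ),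
    (∀ i, 0 < da i ∧ 0 < db i ∧ (a i).IsHomogeneous (da i) ∧ (b i).IsHomogeneous (db i)) ∧
    f = ∑ i, a i * b i

/-- The strength of a polynomial: the minimal number of terms in a decomposition as a
sum of products of homogeneous polynomials of positive degree. -/
noncomputable def strength {K : Type*} [CommSemiring K] {σ : Type*}
    (f : MvPolynomial σ K) : ℕ :=
  sInf {r | StrengthDecomp f r}

/-- `x` lies in the Zariski closure of `S` : every polynomial function (pulled back along any
linear map to a coordinate space) that vanishes on `S` vanishes at `x`. -/
def MemZariskiClosure (F : Type*) [CommSemiring F] {W : Type*} [AddCommMonoid W] [Module F W]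
    (S : Set W) (x : W) : Prop :=
  ∀ (N : ℕ) (φ : W →ₗ[F] (Fin N → F)) (P : MvPolynomial (Fin N) F),
    (∀ s ∈ S, MvPolynomial.eval (φ s) P = 0) → MvPolynomial.eval (φ x) P = 0

/-- The border strength of a degree-`d` form `f` over `K`: the minimal `r` such that `f`,
viewed over the algebraic closure, lies in the Zariski closure of the set of degree-`d`
forms of strength at most `r`. -/
noncomputable def borderStrength (K : Type*) [Field K] {σ : Type*} (d : ℕ)
    (f : MvPolynomial σ K) : ℕ :=
  sInf {r | MemZariskiClosure (AlgebraicClosure K)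
    {g : MvPolynomial σ (AlgebraicClosure K) | g.IsHomogeneous d ∧ StrengthDecomp g r}
    (MvPolynomial.map (algebraMap K (AlgebraicClosure K)) f)}

open Module

/-!
A quadratic form is `x ↦ B x x` for a bilinear form `B`. In a decomposition `f = ∑ aᵢ bᵢ`
only the products of two linear forms survive in degree 2, so `f` vanishes on the common
kernel of those linear `aᵢ`, a subspace of codimension at most the number of terms.
Conversely, if `f` vanishes on `W`, pick linear forms `Lᵢ` (coordinates on `V ⧸ W`)
and vectors `vᵢ` with `x - P x ∈ W` for `P x = ∑ Lᵢ x • vᵢ`; expanding `B x x` around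
`P x` and dropping `B (x - P x) (x - P x) = 0` gives
`B x x = ∑ Lᵢ x * (B vᵢ x + B (x - P x) vᵢ)`, a sum of `codim W` products of linear forms.
Over an infinite field this identity of functions is an identity of polynomials.
-/

namespace MvPolynomial

variable {R σ : Type*}

section CommSemiring

variable [CommSemiring R]

theorem IsHomogeneous.exists_dual_eval_eq {p : MvPolynomial σ R} (hp : p.IsHomogeneous 1) :
    ∃ ℓ : Dual R (σ → R), ∀ x, eval x p = ℓ x := by
  rw [← mem_homogeneousSubmodule, homogeneousSubmodule_one_eq_span_X] at hp
  induction hp using Submodule.span_induction with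
  | mem _ h =>
    obtain ⟨i, rfl⟩ := h
    exact ⟨LinearMap.proj i, fun _ => eval_X i⟩
  | zero => exact ⟨0, by simp⟩
  | add _ _ _ _ h h' =>
    obtain ⟨ℓ, hℓ⟩ := h
    obtain ⟨ℓ', hℓ'⟩ := h'
    exact ⟨ℓ + ℓ', by simp [hℓ, hℓ']⟩
  | smul c _ _ h =>
    obtain ⟨ℓ, hℓ⟩ := h
    exact ⟨c • ℓ, by simp [hℓ]⟩

theorem IsHomogeneous.exists_bilinForm_eval_eq {f : MvPolynomial σ R} (hf : f.IsHomogeneous 2) :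
    ∃ B : LinearMap.BilinForm R (σ → R), ∀ x, eval x f = B x x := by
  rw [← mem_homogeneousSubmodule, ← homogeneousSubmodule_one_pow, pow_two] at hf
  refine Submodule.mul_induction_on hf (fun p hp q hq => ?_) fun _ _ h h' => ?_
  · obtain ⟨ℓ, hℓ⟩ := IsHomogeneous.exists_dual_eval_eq hp
    obtain ⟨ℓ', hℓ'⟩ := IsHomogeneous.exists_dual_eval_eq hq
    exact ⟨(LinearMap.mul R R).compl₁₂ ℓ ℓ', by simp [hℓ, hℓ']⟩
  · obtain ⟨B, hB⟩ := h
    obtain ⟨B', hB'⟩ := h'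
    exact ⟨B + B', by simp [hB, hB']⟩

theorem exists_isHomogeneous_one_eval_eq [Fintype σ] (ℓ : Dual R (σ → R)) :
    ∃ p : MvPolynomial σ R, p.IsHomogeneous 1 ∧ ∀ x, eval x p = ℓ x := by
  classical
  refine ⟨∑ i, C (ℓ (Pi.single i 1)) * X i,
    IsHomogeneous.sum _ _ _ fun i _ => isHomogeneous_C_mul_X _ i, fun x => ?_⟩
  conv_rhs => rw [← (Pi.basisFun R σ).sum_repr x]
  simp [mul_comm]

theorem IsHomogeneous.sum_eq_sum_filter {ι : Type*} {s : Finset ι} {p : ι → MvPolynomial σ R}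
    {d : ι → ℕ} {n : ℕ} (hp : ∀ i ∈ s, (p i).IsHomogeneous (d i))
    (h : (∑ i ∈ s, p i).IsHomogeneous n) :
    ∑ i ∈ s, p i = ∑ i ∈ s with d i = n, p i := by
  rw [← homogeneousComponent_eq_self h, map_sum, Finset.sum_filter]
  refine Finset.sum_congr rfl fun i hi => ?_
  rw [homogeneousComponent_of_mem (hp i hi)]
  exact if_congr eq_comm rfl rfl

theorem IsHomogeneous.eval_zero_eq_zero {f : MvPolynomial σ R} {n : ℕ}
    (hf : f.IsHomogeneous n) (hn : n ≠ 0) : eval 0 f = 0 := by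
  simpa [eval_zero, constantCoeff_eq] using hf.coeff_eq_zero (d := 0) (by simpa using hn.symm)

end CommSemiring

end MvPolynomial

theorem LinearMap.BilinForm.exists_eq_sum_mul_of_isotropic {K V : Type*} [Field K]
    [AddCommGroup V] [Module K V] (B : LinearMap.BilinForm K V) (W : Submodule K V)
    [FiniteDimensional K (V ⧸ W)] (hW : ∀ w ∈ W, B w w = 0) :
    ∃ L G : Fin (finrank K (V ⧸ W)) → Dual K V, ∀ x, B x x = ∑ i, L i x * G i x := by
  set b := Module.finBasis K (V ⧸ W)
  choose v hv using fun i => W.mkQ_surjective (b i)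
  set L : Fin (finrank K (V ⧸ W)) → Dual K V := fun i => b.coord i ∘ₗ W.mkQ
  set P : V →ₗ[K] V := ∑ i, (L i).smulRight (v i)
  have hP : ∀ x, x - P x ∈ W := fun x => by
    rw [← Submodule.Quotient.eq]
    symm
    simp [P, L, ← Submodule.mkQ_apply, hv]
  refine ⟨L, fun i => B (v i) + B.flip (v i) ∘ₗ (LinearMap.id - P), fun x => ?_⟩
  have hx : B x x = B (P x) x + B (x - P x) (P x) := by
    have := hW _ (hP x)
    simp only [map_sub, LinearMap.sub_apply] at this ⊢
    linear_combination this
  rw [hx]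
  simp [P, ← Finset.sum_add_distrib, mul_add]

namespace MvPolynomial

variable {K σ : Type*} [Field K]

theorem StrengthDecomp.exists_submodule_eval_eq_zero {f : MvPolynomial σ K}
    (hf : f.IsHomogeneous 2) {r : ℕ} (hd : StrengthDecomp f r) :
    ∃ W : Submodule K (σ → K),
      (∀ w ∈ W, eval w f = 0) ∧ finrank K ((σ → K) ⧸ W) ≤ r := by
  obtain ⟨a, b, da, db, hab, rfl⟩ := hd
  choose ℓ hℓ using fun i =>
    show ∃ ℓ : Dual K (σ → K), da i = 1 → ∀ x, eval x (a i) = ℓ x by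
    by_cases h : da i = 1
    · obtain ⟨ℓ, hℓ⟩ := (h ▸ (hab i).2.2.1).exists_dual_eval_eq
      exact ⟨ℓ, fun _ => hℓ⟩
    · exact ⟨0, fun h' => absurd h' h⟩
  refine ⟨LinearMap.ker (LinearMap.pi ℓ), fun w hw => ?_, ?_⟩
  · rw [IsHomogeneous.sum_eq_sum_filter (fun i _ => (hab i).2.2.1.mul (hab i).2.2.2) hf,
      map_sum]
    refine Finset.sum_eq_zero fun i hi => ?_
    obtain ⟨hda, hdb, -, -⟩ := hab i
    have hi : da i = 1 := by have := (Finset.mem_filter.1 hi).2; omega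
    rw [map_mul, hℓ i hi, show ℓ i w = 0 from congrFun hw i, zero_mul]
  · rw [(LinearMap.pi ℓ).quotKerEquivRange.finrank_eq]
    simpa using (LinearMap.range (LinearMap.pi ℓ)).finrank_le

theorem strengthDecomp_finrank_quotient_of_eval_eq_zero [Infinite K] [Fintype σ]
    {f : MvPolynomial σ K} (hf : f.IsHomogeneous 2) (W : Submodule K (σ → K))
    (hW : ∀ w ∈ W, eval w f = 0) : StrengthDecomp f (finrank K ((σ → K) ⧸ W)) := by
  obtain ⟨B, hB⟩ := hf.exists_bilinForm_eval_eq
  obtain ⟨L, G, hLG⟩ := B.exists_eq_sum_mul_of_isotropic W fun w hw => hB w ▸ hW w hw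
  choose a ha haL using fun i => exists_isHomogeneous_one_eval_eq (L i)
  choose b hb hbG using fun i => exists_isHomogeneous_one_eval_eq (G i)
  refine ⟨a, b, 1, 1, fun i => ⟨one_pos, one_pos, ha i, hb i⟩, ?_⟩
  refine IsHomogeneous.funext hf (IsHomogeneous.sum _ _ _ fun i _ => (ha i).mul (hb i))
    fun x => ?_
  simp [hB, hLG, haL, hbG]

end MvPolynomial

theorem strength_quadratic_eq_min_codim_general (K : Type*) [Field K] [Infinite K]
    (n : ℕ) (f : MvPolynomial (Fin n) K) (hf : f.IsHomogeneous 2) :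
    strength f =
      sInf {c : ℕ | ∃ W : Submodule K (Fin n → K),
        (∀ w ∈ W, MvPolynomial.eval w f = 0) ∧ c = n - Module.finrank K W} := by
  set S := {c : ℕ | ∃ W : Submodule K (Fin n → K),
    (∀ w ∈ W, MvPolynomial.eval w f = 0) ∧ c = n - Module.finrank K W}
  have codim (W : Submodule K (Fin n → K)) :
      finrank K ((Fin n → K) ⧸ W) = n - finrank K W := by
    rw [W.finrank_quotient, finrank_fin_fun]
  have hbot : ∀ w ∈ (⊥ : Submodule K (Fin n → K)), eval w f = 0 := fun w hw => by
    rw [(Submodule.mem_bot K).1 hw, hf.eval_zero_eq_zero two_ne_zero]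
  apply le_antisymm
  · obtain ⟨W, hW, hc⟩ : sInf S ∈ S := Nat.sInf_mem ⟨_, ⊥, hbot, rfl⟩
    rw [hc, ← codim]
    exact Nat.sInf_le (strengthDecomp_finrank_quotient_of_eval_eq_zero hf W hW)
  · have hs : strength f ∈ {r | StrengthDecomp f r} :=
      Nat.sInf_mem ⟨_, strengthDecomp_finrank_quotient_of_eval_eq_zero hf ⊥ hbot⟩
    obtain ⟨W, hW, hle⟩ := StrengthDecomp.exists_submodule_eval_eq_zero hf hs
    exact (Nat.sInf_le (show _ ∈ S from ⟨W, hW, codim W⟩)).trans hle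

/-- Let `K` be an infinite field and `f` a nonzero quadratic form in
`K[x₁,…,xₙ]`. Then `s_K(f)` equals the minimal codimension of a `K`-linear subspace
`W ⊆ Kⁿ` on which `f` vanishes identically. -/
theorem strength_quadratic_eq_min_codim (K : Type*) [Field K] [Infinite K]
    (n : ℕ) (f : MvPolynomial (Fin n) K) (hf : f.IsHomogeneous 2) (hf0 : f ≠ 0) :
    strength f =
      sInf {c : ℕ | ∃ W : Submodule K (Fin n → K),
        (∀ w ∈ W, MvPolynomial.eval w f = 0) ∧ c = n - Module.finrank K W} :=
  strength_quadratic_eq_min_codim_general K n f hf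
end

section
/- Let K̄ be an algebraically closed field, let d ≥ 2, m ≥ 1, r ≥ 0, and let n be a positive integer with n^d > m² + r·(n^{d−1} + n). Then there exists a nonzero polynomial, with coefficients in the prime field of K̄, in the m·n^d standard coordinates on ((K̄ⁿ)^{⊗d})^m, that vanishes at every m-tuple of tensors in ((K̄ⁿ)^{⊗d})^m of collective partition rank at most r. In particular, the set of m-tuples of collective partition rank at most r is not Zariski dense in ((K̄ⁿ)^{⊗d})^m. -/
set_option linter.unusedSectionVars false

open PiTensorProduct
open scoped TensorProduct

section PartitionRank

variable (F : Type*) [Field F] {d : ℕ} (W : Fin d → Type*)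
  [∀ i, AddCommGroup (W i)] [∀ i, Module F (W i)]

/-- Combine a family indexed by `I` and a family indexed by the complement of `I`
into a family indexed by `Fin d`. -/
def combineVec (I : Finset (Fin d)) (v : ∀ i : {x : Fin d // x ∈ I}, W i)
    (w : ∀ i : {x : Fin d // x ∉ I}, W i) : ∀ i, W i :=
  fun i => if h : i ∈ I then v ⟨i, h⟩ else w ⟨i, h⟩

theorem combineVec_update_right (I : Finset (Fin d)) {instd : DecidableEq (Fin d)}
    {insts : DecidableEq {x : Fin d // x ∉ I}} (v : ∀ i : {x : Fin d // x ∈ I}, W i)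
    (w : ∀ i : {x : Fin d // x ∉ I}, W i) (j : {x : Fin d // x ∉ I}) (x : W j) :
    combineVec W I v (Function.update w j x) =
      Function.update (combineVec W I v w) (j : Fin d) x := by
  obtain ⟨jv, hj⟩ := j
  funext i
  rcases eq_or_ne i jv with rfl | hij
  · simp [combineVec, hj]
  · rw [Function.update_of_ne hij]
    by_cases h : i ∈ I
    · simp [combineVec, h]
    · have hne : (⟨i, h⟩ : {x : Fin d // x ∉ I}) ≠ ⟨jv, hj⟩ := by
        simpa [Subtype.ext_iff] using hij
      simp [combineVec, h, Function.update_of_ne hne]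

theorem combineVec_update_left (I : Finset (Fin d)) {instd : DecidableEq (Fin d)}
    {insts : DecidableEq {x : Fin d // x ∈ I}} (v : ∀ i : {x : Fin d // x ∈ I}, W i)
    (w : ∀ i : {x : Fin d // x ∉ I}, W i) (j : {x : Fin d // x ∈ I}) (x : W j) :
    combineVec W I (Function.update v j x) w =
      Function.update (combineVec W I v w) (j : Fin d) x := by
  obtain ⟨jv, hj⟩ := j
  funext i
  rcases eq_or_ne i jv with rfl | hij
  · simp [combineVec, hj]
  · rw [Function.update_of_ne hij]
    by_cases h : i ∈ I
    · have hne : (⟨i, h⟩ : {x : Fin d // x ∈ I}) ≠ ⟨jv, hj⟩ := by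
        simpa [Subtype.ext_iff] using hij
      simp [combineVec, h, Function.update_of_ne hne]
    · simp [combineVec, h]

/-- The inner multilinear map used to define the partition multiplication. -/
noncomputable def partMulInner (I : Finset (Fin d))
    (v : ∀ i : {x : Fin d // x ∈ I}, W i) :
    MultilinearMap F (fun i : {x : Fin d // x ∉ I} => W i) (⨂[F] i, W i) where
  toFun w := tprod F (combineVec W I v w)
  map_update_add' w j x y := by
    simp only [combineVec_update_right, MultilinearMap.map_update_add]
  map_update_smul' w j c x := by
    simp only [combineVec_update_right, MultilinearMap.map_update_smul]

/-- The outer multilinear map used to define the partition multiplication. -/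
noncomputable def partMulOuter (I : Finset (Fin d)) :
    MultilinearMap F (fun i : {x : Fin d // x ∈ I} => W i)
      ((⨂[F] i : {x : Fin d // x ∉ I}, W i) →ₗ[F] ⨂[F] i, W i) where
  toFun v := PiTensorProduct.lift (partMulInner F W I v)
  map_update_add' v j x y := by
    ext w
    simp [partMulInner, combineVec_update_left, MultilinearMap.map_update_add]
  map_update_smul' v j c x := by
    ext w
    simp [partMulInner, combineVec_update_left, MultilinearMap.map_update_smul]

/-- The canonical bilinear "partition multiplication"
`V_I ⊗ V_{I^c} → V₁ ⊗ ⋯ ⊗ V_d` realising the canonical isomorphism on pairs. -/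
noncomputable def partMul (I : Finset (Fin d)) :
    (⨂[F] i : {x : Fin d // x ∈ I}, W i) →ₗ[F]
      (⨂[F] i : {x : Fin d // x ∉ I}, W i) →ₗ[F] ⨂[F] i, W i :=
  PiTensorProduct.lift (partMulOuter F W I)

/-- Witnesses "partition rank at most `r`": a decomposition `t = Σ_{k=1}^r a_k ⊗ b_k`
with `a_k ∈ V_{I_k}`, `b_k ∈ V_{I_k^c}` for proper nonempty subsets `I_k ⊂ [d]`. -/
def PrkDecomp (t : ⨂[F] i, W i) (r : ℕ) : Prop :=
  ∃ I : Fin r → Finset (Fin d),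
    (∀ k, (I k).Nonempty ∧ I k ≠ Finset.univ) ∧
    ∃ (a : ∀ k, ⨂[F] i : {x : Fin d // x ∈ I k}, W i)
      (b : ∀ k, ⨂[F] i : {x : Fin d // x ∉ I k}, W i),
      t = ∑ k, partMul F W (I k) (a k) (b k)

/-- The partition rank of a tensor. -/
noncomputable def prk (t : ⨂[F] i, W i) : ℕ :=
  sInf {r | PrkDecomp F W t r}

/-- Witnesses "collective partition rank at most `r`" for a tuple of tensors: some
nonzero linear combination has partition rank at most `r`. -/
def CollectivePrkDecomp {m : ℕ} (t : Fin m → ⨂[F] i, W i) (r : ℕ) : Prop :=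
  ∃ c : Fin m → F, c ≠ 0 ∧ PrkDecomp F W (∑ ℓ, c ℓ • t ℓ) r

/-- The collective partition rank of a tuple of tensors. -/
noncomputable def collectivePrk {m : ℕ} (t : Fin m → ⨂[F] i, W i) : ℕ :=
  sInf {r | CollectivePrkDecomp F W t r}

end PartitionRank

section BaseChange

variable (K L : Type*) [Field K] [Field L] [Algebra K L]
variable {d : ℕ} (W : Fin d → Type*) [∀ i, AddCommGroup (W i)] [∀ i, Module K (W i)]

/-- The canonical `K`-linear map `V₁ ⊗ ⋯ ⊗ V_d → (L ⊗ V₁) ⊗_L ⋯ ⊗_L (L ⊗ V_d)`. -/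
noncomputable def tensorBaseChange :
    (⨂[K] i, W i) →ₗ[K] ⨂[L] i, (L ⊗[K] W i) :=
  PiTensorProduct.lift
    (((PiTensorProduct.tprod L (s := fun i => L ⊗[K] W i)).restrictScalars K).compLinearMap
      (fun i => TensorProduct.mk K L (W i) 1))

end BaseChange
section Border

variable (K : Type*) [Field K] {d : ℕ} (W : Fin d → Type*)
  [∀ i, AddCommGroup (W i)] [∀ i, Module K (W i)]

/-- The border partition rank of a tensor: the minimal `r` such that the tensor, viewed
over the algebraic closure, lies in the Zariski closure of the tensors of partition rank
at most `r`. -/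
noncomputable def borderPrk (t : ⨂[K] i, W i) : ℕ :=
  sInf {r | MemZariskiClosure (AlgebraicClosure K)
    {s : ⨂[AlgebraicClosure K] i, (AlgebraicClosure K ⊗[K] W i) |
      PrkDecomp (AlgebraicClosure K) (fun i => AlgebraicClosure K ⊗[K] W i) s r}
    (tensorBaseChange K (AlgebraicClosure K) W t)}

/-- The border collective partition rank of an `m`-tuple of tensors. -/
noncomputable def borderCollectivePrk {m : ℕ} (t : Fin m → ⨂[K] i, W i) : ℕ :=
  sInf {r | MemZariskiClosure (AlgebraicClosure K)
    {s : Fin m → ⨂[AlgebraicClosure K] i, (AlgebraicClosure K ⊗[K] W i) |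
      CollectivePrkDecomp (AlgebraicClosure K) (fun i => AlgebraicClosure K ⊗[K] W i) s r}
    (fun ℓ => tensorBaseChange K (AlgebraicClosure K) W (t ℓ))}

end Border

section PiIota

variable (K : Type*) [Field K] {n : ℕ} {V : Type*} [AddCommGroup V] [Module K V]

/-- The linear form in `K[x₁,…,xₙ]` associated to a vector of `V` via a basis. -/
noncomputable def linearFormOf (b : Module.Basis (Fin n) K V) : V →ₗ[K] MvPolynomial (Fin n) K :=
  (Finsupp.linearCombination K fun j => (MvPolynomial.X j : MvPolynomial (Fin n) K)) ∘ₗ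
    b.repr.toLinearMap

/-- The multiplication map `π : V^{⊗d} → S^d V`, `v₁ ⊗ ⋯ ⊗ v_d ↦ v₁⋯v_d`, where `S^d V` is
realised as the space of degree-`d` forms in `K[x₁,…,xₙ]` via the basis `b`. -/
noncomputable def tensorToPoly (b : Module.Basis (Fin n) K V) (d : ℕ) :
    (⨂[K] _ : Fin d, V) →ₗ[K] MvPolynomial (Fin n) K :=
  PiTensorProduct.lift
    ((MultilinearMap.mkPiAlgebra K (Fin d) (MvPolynomial (Fin n) K)).compLinearMap
      (fun _ => linearFormOf K b))

/-- The symmetrisation map `ι : S^d V → V^{⊗d}`,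
`v₁⋯v_d ↦ Σ_{σ ∈ S_d} v_{σ(1)} ⊗ ⋯ ⊗ v_{σ(d)}`, where `S^d V` is realised as the space of
degree-`d` forms in `K[x₁,…,xₙ]` via the basis `b`. -/
noncomputable def polyToTensor (b : Module.Basis (Fin n) K V) (d : ℕ) :
    MvPolynomial (Fin n) K →ₗ[K] ⨂[K] _ : Fin d, V :=
  ∑ w : Fin d → Fin n,
    (∏ j : Fin n, Nat.factorial ((∑ i : Fin d, Finsupp.single (w i) 1 : Fin n →₀ ℕ) j)) •
      ((LinearMap.toSpanSingleton K _ (PiTensorProduct.tprod K fun i => b (w i))) ∘ₗ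
        (MvPolynomial.lcoeff K (∑ i : Fin d, Finsupp.single (w i) 1)))

end PiIota

section Coords

variable (F : Type*) [Field F]

/-- The standard coordinate on `(Fⁿ)^{⊗d}` indexed by the word `w`, i.e. the coefficient
of the basis vector `e_{w 0} ⊗ ⋯ ⊗ e_{w (d-1)}`. -/
noncomputable def stdCoord (d n : ℕ) (w : Fin d → Fin n) :
    (⨂[F] _ : Fin d, (Fin n → F)) →ₗ[F] F :=
  PiTensorProduct.lift
    ((MultilinearMap.mkPiAlgebra F (Fin d) F).compLinearMap
      (fun i => LinearMap.proj (w i)))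

end Coords

/-! Normalise a low-rank combination `∑ c ℓ • t ℓ = ∑ₖ aₖ ⊗ bₖ` so that `c ℓ₀ = 1` and
solve for `t ℓ₀`: the coordinates of the tuple become polynomials over the prime field in the
other coefficients, the coordinates of the `t ℓ` with `ℓ ≠ ℓ₀`, and the coordinates of the
factors `aₖ ∈ V_{Iₖ}`, `bₖ ∈ V_{Iₖᶜ}`. Since `n^|I| + n^(d-|I|) ≤ n^(d-1) + n`, these are fewer
than the `m nᵈ` coordinates, so for each of the finitely many choices of `ℓ₀` and `(Iₖ)` the
coordinate polynomials are algebraically dependent; the product of the dependence relations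
vanishes on every tuple of collective partition rank at most `r`. A nonzero polynomial over an
infinite field does not vanish everywhere, so these tuples are not Zariski dense. -/

open MvPolynomial

section Hypersurface

variable (R : Type*) [CommRing R] {σ A : Type*} [CommRing A] [Algebra R A]

def IsInHypersurface (S : Set (σ → A)) : Prop :=
  ∃ P : MvPolynomial σ R, P ≠ 0 ∧ ∀ s ∈ S, aeval s P = 0

variable {R}

theorem IsInHypersurface.mono {S T : Set (σ → A)} (hST : S ⊆ T)
    (hT : IsInHypersurface R T) : IsInHypersurface R S :=
  let ⟨P, hP, hPT⟩ := hT
  ⟨P, hP, fun s hs => hPT s (hST hs)⟩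

theorem isInHypersurface_iUnion [IsDomain R] {J : Type*} [Finite J] {T : J → Set (σ → A)}
    (hT : ∀ j, IsInHypersurface R (T j)) : IsInHypersurface R (⋃ j, T j) := by
  have := Fintype.ofFinite J
  choose P hP hPT using hT
  refine ⟨∏ j, P j, Finset.prod_ne_zero_iff.2 fun j _ => hP j, fun s hs => ?_⟩
  obtain ⟨j, hj⟩ := Set.mem_iUnion.1 hs
  rw [map_prod]
  exact Finset.prod_eq_zero (Finset.mem_univ j) (hPT j s hj)

theorem MvPolynomial.exists_ne_zero_aeval_eq_zero_of_card_lt [IsDomain R] {τ : Type*}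
    [Fintype σ] [Fintype τ] (h : Fintype.card τ < Fintype.card σ) (f : σ → MvPolynomial τ R) :
    ∃ P : MvPolynomial σ R, P ≠ 0 ∧ aeval f P = 0 := by
  by_contra! hf
  have hind : AlgebraicIndependent R f :=
    algebraicIndependent_iff.2 fun P hP => by_contra fun hP0 => hf P hP0 hP
  have := hind.lift_cardinalMk_le_trdeg
  rw [MvPolynomial.trdeg_of_isDomain] at this
  simp only [Cardinal.mk_fintype, Cardinal.lift_natCast, Nat.cast_le] at this
  omega

theorem isInHypersurface_range_of_card_lt [IsDomain R] {τ : Type*} [Fintype σ] [Fintype τ]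
    (h : Fintype.card τ < Fintype.card σ) (f : σ → MvPolynomial τ R) :
    IsInHypersurface R (Set.range fun (θ : τ → A) i => aeval θ (f i)) := by
  obtain ⟨P, hP, hfP⟩ := exists_ne_zero_aeval_eq_zero_of_card_lt h f
  refine ⟨P, hP, ?_⟩
  rintro _ ⟨θ, rfl⟩
  rw [← comp_aeval_apply, hfP, map_zero]

end Hypersurface

theorem exists_not_memZariskiClosure {F W σ : Type*} [Field F] [Infinite F] [AddCommGroup W]
    [Module F W] [Fintype σ] {coord : W →ₗ[F] σ → F} (hcoord : Function.Surjective coord)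
    {S : Set W} {P : MvPolynomial σ F} (hP : P ≠ 0) (hPS : ∀ s ∈ S, eval (coord s) P = 0) :
    ∃ x, ¬ MemZariskiClosure F S x := by
  obtain ⟨y, hy⟩ : ∃ y, eval y P ≠ 0 := by
    by_contra! h
    exact hP (MvPolynomial.funext fun y => by simpa using h y)
  obtain ⟨x, rfl⟩ := hcoord y
  let e := Fintype.equivFin σ
  have heval : ∀ w, eval (LinearMap.funLeft F F e.symm (coord w)) (rename e P) = eval (coord w) P :=
    fun w => by simp [eval_rename, Function.comp_def, LinearMap.funLeft]
  refine ⟨x, fun hx => hy ?_⟩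
  rw [← heval]
  exact hx _ (LinearMap.funLeft F F e.symm ∘ₗ coord) _ fun s hs => (heval s).trans (hPS s hs)

section TensorCoord

variable (F : Type*) [Field F] {ι : Type*} [Fintype ι] {n : ℕ}

noncomputable def tensorCoord (u : ι → Fin n) : (⨂[F] _ : ι, (Fin n → F)) →ₗ[F] F :=
  lift ((MultilinearMap.mkPiAlgebra F ι F).compLinearMap fun i => LinearMap.proj (u i))

variable {F}

@[simp]
theorem tensorCoord_tprod (u : ι → Fin n) (v : ι → Fin n → F) :
    tensorCoord F u (tprod F v) = ∏ i, v i (u i) := by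
  simp [tensorCoord]

theorem tensorCoord_eq_repr (u : ι → Fin n) (t : ⨂[F] _ : ι, (Fin n → F)) :
    tensorCoord F u t = (Basis.piTensorProduct fun _ => Pi.basisFun F (Fin n)).repr t u := by
  induction t using PiTensorProduct.induction_on with
  | smul_tprod c v => simp [Basis.piTensorProduct_repr_tprod_apply]
  | add x y hx hy => simp [hx, hy]

theorem stdCoord_eq_tensorCoord (d : ℕ) (w : Fin d → Fin n) :
    stdCoord F d n w = tensorCoord F w := rfl

end TensorCoord

section TensorCoordPartMul

variable {F : Type*} [Field F] {d n : ℕ}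

theorem partMul_tprod_tprod {W : Fin d → Type*} [∀ i, AddCommGroup (W i)] [∀ i, Module F (W i)]
    (I : Finset (Fin d)) (v : ∀ i : {x // x ∈ I}, W i) (w : ∀ i : {x // x ∉ I}, W i) :
    partMul F W I (tprod F v) (tprod F w) = tprod F (combineVec W I v w) := by
  simp [partMul, partMulOuter, partMulInner]

theorem tensorCoord_partMul (I : Finset (Fin d)) (w : Fin d → Fin n)
    (a : ⨂[F] _ : {x // x ∈ I}, (Fin n → F)) (b : ⨂[F] _ : {x // x ∉ I}, (Fin n → F)) :
    tensorCoord F w (partMul F (fun _ => Fin n → F) I a b) =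
      tensorCoord F (fun i : {x // x ∈ I} => w i) a *
        tensorCoord F (fun i : {x // x ∉ I} => w i) b := by
  induction a using PiTensorProduct.induction_on with
  | add a a' ha ha' => simp only [map_add, LinearMap.add_apply, ha, ha', add_mul]
  | smul_tprod c v =>
    induction b using PiTensorProduct.induction_on with
    | add b b' hb hb' => simp only [map_add, hb, hb', mul_add]
    | smul_tprod c' v' =>
      have hin (i : {x // x ∈ I}) : combineVec (fun _ => Fin n → F) I v v' i = v i := dif_pos i.2
      have hout (i : {x // x ∉ I}) : combineVec (fun _ => Fin n → F) I v v' i = v' i := dif_neg i.2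
      simp only [map_smul, LinearMap.smul_apply, smul_eq_mul, partMul_tprod_tprod,
        tensorCoord_tprod]
      rw [← Fintype.prod_subtype_mul_prod_subtype (· ∈ I)]
      simp only [hin, hout]
      rw [show ∀ A B : F, c' * (c * (A * B)) = c * A * (c' * B) from fun A B => by ring]
      -- the two products over `I` differ only in their `Fintype` instances
      congr
      exact Subsingleton.elim _ _

end TensorCoordPartMul

theorem CollectivePrkDecomp.exists_normalized {F : Type*} [Field F] {d m r : ℕ}
    {W : Fin d → Type*} [∀ i, AddCommGroup (W i)] [∀ i, Module F (W i)]
    {t : Fin m → ⨂[F] i, W i} (ht : CollectivePrkDecomp F W t r) :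
    ∃ (ℓ₀ : Fin m) (c : Fin m → F) (I : Fin r → Finset (Fin d)), c ℓ₀ = 1 ∧
      (∀ k, (I k).Nonempty ∧ I k ≠ Finset.univ) ∧
      ∃ (a : ∀ k, ⨂[F] i : {x // x ∈ I k}, W i) (b : ∀ k, ⨂[F] i : {x // x ∉ I k}, W i),
        ∑ ℓ, c ℓ • t ℓ = ∑ k, partMul F W (I k) (a k) (b k) := by
  obtain ⟨c, hc, I, hI, a, b, hab⟩ := ht
  obtain ⟨ℓ₀, hℓ₀⟩ := Function.ne_iff.1 hc
  refine ⟨ℓ₀, (c ℓ₀)⁻¹ • c, I, inv_mul_cancel₀ hℓ₀, hI, fun k => (c ℓ₀)⁻¹ • a k, b, ?_⟩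
  simp only [Pi.smul_apply, smul_eq_mul, mul_smul, ← Finset.smul_sum, hab, map_smul,
    LinearMap.smul_apply]

section TupleCoord

variable (F : Type*) [Field F] (d n m : ℕ)

noncomputable def tupleCoord :
    (Fin m → ⨂[F] _ : Fin d, (Fin n → F)) →ₗ[F] (Fin d → Fin n) × Fin m → F :=
  LinearMap.pi fun p => stdCoord F d n p.1 ∘ₗ LinearMap.proj p.2

theorem tupleCoord_surjective : Function.Surjective (tupleCoord F d n m) := by
  let b := Basis.piTensorProduct fun _ : Fin d => Pi.basisFun F (Fin n)
  refine fun y => ⟨fun ℓ => b.repr.symm (Finsupp.equivFunOnFinite.symm fun w => y (w, ℓ)), ?_⟩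
  funext ⟨w, ℓ⟩
  simp [tupleCoord, stdCoord_eq_tensorCoord, tensorCoord_eq_repr, b]

end TupleCoord

theorem pow_add_pow_sub_le {n c d : ℕ} (hc : 1 ≤ c) (hcd : c < d) :
    n ^ c + n ^ (d - c) ≤ n ^ (d - 1) + n := by
  obtain ⟨a, rfl⟩ : ∃ a, c = a + 1 := ⟨c - 1, by omega⟩
  obtain ⟨b, rfl⟩ : ∃ b, d = a + b + 2 := ⟨d - a - 2, by omega⟩
  rw [show a + b + 2 - (a + 1) = b + 1 by omega, show a + b + 2 - 1 = a + b + 1 by omega,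
    pow_succ, pow_succ, pow_succ, pow_add]
  rcases Nat.eq_zero_or_pos n with rfl | hn
  · simp
  · obtain ⟨x, hx⟩ := Nat.exists_eq_add_of_le' (Nat.one_le_pow a n hn)
    obtain ⟨y, hy⟩ := Nat.exists_eq_add_of_le' (Nat.one_le_pow b n hn)
    rw [hx, hy]
    nlinarith [Nat.zero_le (x * y * n)]

section LowRankParametrization

variable {d m r : ℕ} (n : ℕ)

abbrev LowRankParams (ℓ₀ : Fin m) (I : Fin r → Finset (Fin d)) : Type :=
  {ℓ : Fin m // ℓ ≠ ℓ₀} ⊕ ({ℓ : Fin m // ℓ ≠ ℓ₀} × (Fin d → Fin n)) ⊕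
    (Σ k, ({x // x ∈ I k} → Fin n)) ⊕ (Σ k, ({x // x ∉ I k} → Fin n))

/-- The coordinates of a tuple `t` with `t ℓ₀ = ∑ₖ aₖ ⊗ bₖ - ∑_{ℓ ≠ ℓ₀} c ℓ • t ℓ`, as
polynomials in the `c ℓ` and the coordinates of the `t ℓ` (for `ℓ ≠ ℓ₀`), `aₖ` and `bₖ`. -/
noncomputable def lowRankParamPoly (R : Type*) [CommRing R] (ℓ₀ : Fin m)
    (I : Fin r → Finset (Fin d)) (p : (Fin d → Fin n) × Fin m) :
    MvPolynomial (LowRankParams n ℓ₀ I) R :=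
  if h : p.2 = ℓ₀ then
    ∑ k, X (.inr (.inr (.inl ⟨k, fun i => p.1 i⟩))) * X (.inr (.inr (.inr ⟨k, fun i => p.1 i⟩))) -
      ∑ ℓ : {ℓ // ℓ ≠ ℓ₀}, X (.inl ℓ) * X (.inr (.inl (ℓ, p.1)))
  else X (.inr (.inl (⟨p.2, h⟩, p.1)))

variable {n}

theorem tupleCoord_mem_range_lowRankParamPoly {F : Type*} [Field F] (R : Type*) [CommRing R]
    [Algebra R F] {ℓ₀ : Fin m} {c : Fin m → F} {I : Fin r → Finset (Fin d)}
    {t : Fin m → ⨂[F] _ : Fin d, (Fin n → F)} {a : ∀ k, ⨂[F] _ : {x // x ∈ I k}, (Fin n → F)}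
    {b : ∀ k, ⨂[F] _ : {x // x ∉ I k}, (Fin n → F)} (hc : c ℓ₀ = 1)
    (habt : ∑ ℓ, c ℓ • t ℓ = ∑ k, partMul F (fun _ => Fin n → F) (I k) (a k) (b k)) :
    tupleCoord F d n m t ∈ Set.range fun θ p => aeval θ (lowRankParamPoly n R ℓ₀ I p) := by
  refine ⟨Sum.elim (fun ℓ => c ℓ) <| Sum.elim (fun q => tensorCoord F q.2 (t q.1)) <|
    Sum.elim (fun q => tensorCoord F q.2 (a q.1)) (fun q => tensorCoord F q.2 (b q.1)), ?_⟩
  funext ⟨w, ℓ⟩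
  by_cases h : ℓ = ℓ₀
  · subst h
    rw [Fintype.sum_eq_add_sum_subtype_ne _ ℓ, hc, one_smul, ← eq_sub_iff_add_eq] at habt
    simp [lowRankParamPoly, tupleCoord, stdCoord_eq_tensorCoord, habt, tensorCoord_partMul]
  · simp [lowRankParamPoly, h, tupleCoord, stdCoord_eq_tensorCoord]

theorem card_lowRankParams_lt (ℓ₀ : Fin m) {I : Fin r → Finset (Fin d)}
    (hI : ∀ k, (I k).Nonempty ∧ I k ≠ Finset.univ) (h : m - 1 + r * (n ^ (d - 1) + n) < n ^ d) :
    Fintype.card (LowRankParams n ℓ₀ I) < Fintype.card ((Fin d → Fin n) × Fin m) := by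
  have hk (k : Fin r) : n ^ (I k).card + n ^ (d - (I k).card) ≤ n ^ (d - 1) + n :=
    pow_add_pow_sub_le (Finset.card_pos.2 (hI k).1)
      (by simpa using (Finset.card_lt_iff_ne_univ _).2 (hI k).2)
  have hsum := Finset.sum_le_card_nsmul Finset.univ _ _ fun k _ => hk k
  simp only [Finset.card_univ, Fintype.card_fin, smul_eq_mul, Finset.sum_add_distrib] at hsum
  simp only [Fintype.card_sum, Fintype.card_prod, Fintype.card_pi, Fintype.card_sigma,
    Fintype.card_subtype_compl, Fintype.card_unique, Fintype.card_fin, Fintype.card_coe,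
    Finset.prod_const, Finset.card_univ]
  obtain ⟨m', rfl⟩ : ∃ m', m = m' + 1 := ⟨m - 1, by have := ℓ₀.2; omega⟩
  rw [Nat.add_sub_cancel] at h ⊢
  nlinarith

end LowRankParametrization

theorem isInHypersurface_tupleCoord_collectivePrkDecomp (F R : Type*) [Field F] [CommRing R]
    [IsDomain R] [Algebra R F] {d m r n : ℕ} (h : m - 1 + r * (n ^ (d - 1) + n) < n ^ d) :
    IsInHypersurface R
      (tupleCoord F d n m '' {t | CollectivePrkDecomp F (fun _ => Fin n → F) t r}) := by
  refine IsInHypersurface.mono ?_ (isInHypersurface_iUnion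
    (J := Fin m × {I : Fin r → Finset (Fin d) // ∀ k, (I k).Nonempty ∧ I k ≠ Finset.univ})
    fun j => isInHypersurface_range_of_card_lt (card_lowRankParams_lt j.1 j.2.2 h)
      (lowRankParamPoly n R j.1 j.2.1))
  rintro _ ⟨t, ht, rfl⟩
  obtain ⟨ℓ₀, c, I, hc, hI, a, b, habt⟩ := ht.exists_normalized
  exact Set.mem_iUnion.2 ⟨(ℓ₀, ⟨I, hI⟩), tupleCoord_mem_range_lowRankParamPoly R hc habt⟩

theorem exists_equation_vanishing_on_low_collectivePrk_general
    (Kbar : Type*) [Field Kbar] [IsAlgClosed Kbar] (d m r n : ℕ)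
    (hineq : m ^ 2 + r * (n ^ (d - 1) + n) < n ^ d) :
    ∃ P : MvPolynomial ((Fin d → Fin n) × Fin m) Kbar, P ≠ 0 ∧
      (∀ mo : ((Fin d → Fin n) × Fin m) →₀ ℕ,
        MvPolynomial.coeff mo P ∈ (⊥ : Subfield Kbar)) ∧
      (∀ t : Fin m → ⨂[Kbar] _ : Fin d, (Fin n → Kbar),
        CollectivePrkDecomp Kbar (fun _ : Fin d => Fin n → Kbar) t r →
          MvPolynomial.eval (fun p => stdCoord Kbar d n p.1 (t p.2)) P = 0) ∧
      ¬ (∀ x : Fin m → ⨂[Kbar] _ : Fin d, (Fin n → Kbar),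
          MemZariskiClosure Kbar
            {t : Fin m → ⨂[Kbar] _ : Fin d, (Fin n → Kbar) |
              CollectivePrkDecomp Kbar (fun _ : Fin d => Fin n → Kbar) t r} x) := by
  have h : m - 1 + r * (n ^ (d - 1) + n) < n ^ d := by
    have := Nat.le_self_pow two_ne_zero m
    omega
  obtain ⟨P, hP, hPS⟩ := isInHypersurface_tupleCoord_collectivePrkDecomp Kbar
    (⊥ : Subfield Kbar) h
  have hP' : P.map (algebraMap (⊥ : Subfield Kbar) Kbar) ≠ 0 :=
    (map_injective _ (algebraMap (⊥ : Subfield Kbar) Kbar).injective).ne_iff.2 hP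
  have hvanish (t) (ht : CollectivePrkDecomp Kbar (fun _ : Fin d => Fin n → Kbar) t r) :
      eval (tupleCoord Kbar d n m t) (P.map (algebraMap (⊥ : Subfield Kbar) Kbar)) = 0 := by
    rw [eval_map, ← aeval_def]
    exact hPS _ ⟨t, ht, rfl⟩
  refine ⟨_, hP', fun mo => by rw [coeff_map]; exact (coeff mo P).2, hvanish, fun hdense => ?_⟩
  obtain ⟨x, hx⟩ := exists_not_memZariskiClosure (tupleCoord_surjective Kbar d n m) hP' hvanish
  exact hx (hdense x)

/-- Let `K̄` be an algebraically closed field, `d ≥ 2`, `m ≥ 1`, `r ≥ 0`,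
and `n > 0` with `n^d > m² + r·(n^(d-1) + n)`. Then there exists a nonzero polynomial, with
coefficients in the prime field of `K̄`, in the `m·n^d` standard coordinates on
`((K̄ⁿ)^{⊗d})^m`, vanishing at every `m`-tuple of collective partition rank at most `r`.
In particular, the set of such tuples is not Zariski dense. -/
theorem exists_equation_vanishing_on_low_collectivePrk
    (Kbar : Type*) [Field Kbar] [IsAlgClosed Kbar] (d m r n : ℕ)
    (hd : 2 ≤ d) (hm : 1 ≤ m) (hn : 0 < n)
    (hineq : m ^ 2 + r * (n ^ (d - 1) + n) < n ^ d) :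
    ∃ P : MvPolynomial ((Fin d → Fin n) × Fin m) Kbar, P ≠ 0 ∧
      (∀ mo : ((Fin d → Fin n) × Fin m) →₀ ℕ,
        MvPolynomial.coeff mo P ∈ (⊥ : Subfield Kbar)) ∧
      (∀ t : Fin m → ⨂[Kbar] _ : Fin d, (Fin n → Kbar),
        CollectivePrkDecomp Kbar (fun _ : Fin d => Fin n → Kbar) t r →
          MvPolynomial.eval (fun p => stdCoord Kbar d n p.1 (t p.2)) P = 0) ∧
      ¬ (∀ x : Fin m → ⨂[Kbar] _ : Fin d, (Fin n → Kbar),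
          MemZariskiClosure Kbar
            {t : Fin m → ⨂[Kbar] _ : Fin d, (Fin n → Kbar) |
              CollectivePrkDecomp Kbar (fun _ : Fin d => Fin n → Kbar) t r} x) :=
  exists_equation_vanishing_on_low_collectivePrk_general Kbar d m r n hineq
end
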